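/- arXiv:2504.03851 — 6 statements merged into one kernel-verified Lean document; each statement's English description precedes it below -/
import Mathlib

section
/- Let p be a prime, n ≥ 1, x ∈ ℤ_p, and b₀, …, b_n ∈ ℤ_{≥0}; set ξ_i = p^{−b_i}. Then the set Γ of integer vectors (a₀, …, a_n) ∈ ℤ^{n+1} such that the polynomial P = a_n X^n + ⋯ + a₀ satisfies |(1/i!) P^{(i)}(x)|_p ≤ ξ_i for all 0 ≤ i ≤ n is an additive subgroup of ℤ^{n+1} of index ∏_{i=0}^{n} p^{b_i}; equivalently, Γ is a full-rank sublattice of ℤ^{n+1} of covolume ∏_{i=0}^{n} ξ_i^{−1}. -/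
open Polynomial


lemma coeff_sum_fin' {R : Type*} [Semiring R] {n : ℕ} (g : Fin (n+1) → R) (m : ℕ) :
    (∑ j : Fin (n+1), Polynomial.C (g j) * Polynomial.X ^ (j:ℕ)).coeff m =
    if h : m < n + 1 then g ⟨m, h⟩ else 0 := by
  rw [Polynomial.finset_sum_coeff]
  simp only [Polynomial.coeff_C_mul, Polynomial.coeff_X_pow, mul_ite, mul_one, mul_zero]
  by_cases h : m < n + 1
  · rw [dif_pos h, Finset.sum_eq_single (⟨m, h⟩ : Fin (n+1))]
    · simp
    · intro j _ hj
      have : (j : ℕ) ≠ m := fun e => hj (Fin.ext e)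
      simp only [ite_eq_right_iff]
      exact fun e => absurd e.symm this
    · simp
  · rw [dif_neg h]
    apply Finset.sum_eq_zero
    intro j _
    have : (j : ℕ) ≠ m := by omega
    simp only [ite_eq_right_iff]
    exact fun e => absurd e.symm this

lemma hasseDeriv_map' {R S : Type*} [CommSemiring R] [CommSemiring S] (g : R →+* S)
    (k : ℕ) (f : R[X]) :
    (Polynomial.hasseDeriv k f).map g = Polynomial.hasseDeriv k (f.map g) := by
  ext m
  simp [Polynomial.coeff_map, Polynomial.hasseDeriv_coeff]

lemma toZModPow_eq_of_dvd {p : ℕ} [Fact p.Prime] {k : ℕ} {u v : ℤ_[p]}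
    (h : (p : ℤ_[p]) ^ k ∣ u - v) :
    PadicInt.toZModPow k u = PadicInt.toZModPow k v := by
  have : u - v ∈ RingHom.ker (PadicInt.toZModPow (p := p) k) := by
    rw [PadicInt.ker_toZModPow, Ideal.mem_span_singleton]
    exact h
  rw [RingHom.mem_ker, map_sub, sub_eq_zero] at this
  exact this

/-- Let `p` be a prime, `n ≥ 1`, `x ∈ ℤ_p` and `b₀, …, b_n ∈ ℤ_{≥0}`; set
`ξ_i = p^{-b_i}`. Then the set `Γ` of integer vectors `(a₀, …, a_n) ∈ ℤ^{n+1}` such that the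
polynomial `P = a_n X^n + ⋯ + a₀` satisfies `|(1/i!) P⁽ⁱ⁾(x)|_p ≤ ξ_i` for all `0 ≤ i ≤ n` is
an additive subgroup of `ℤ^{n+1}` of index `∏_{i=0}^{n} p^{b_i}` (equivalently, a full-rank
sublattice of covolume `∏ ξ_i⁻¹`). -/
theorem stmt8 (p : ℕ) [Fact p.Prime] (n : ℕ) (hn : 1 ≤ n) (x : ℤ_[p])
    (b : Fin (n + 1) → ℕ) :
    ∃ Γ : AddSubgroup (Fin (n + 1) → ℤ),
      (∀ a : Fin (n + 1) → ℤ,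
        a ∈ Γ ↔ ∀ i : Fin (n + 1),
          ‖Polynomial.aeval x (Polynomial.hasseDeriv (i : ℕ)
              (∑ j : Fin (n + 1), Polynomial.C (a j) * Polynomial.X ^ (j : ℕ)))‖
            ≤ (p : ℝ) ^ (-(b i : ℤ))) ∧
      Γ.index = ∏ i : Fin (n + 1), p ^ (b i) := by
  have hp : p.Prime := Fact.out
  haveI : ∀ i : Fin (n+1), NeZero (p ^ b i) := fun i => ⟨pow_ne_zero _ hp.ne_zero⟩
  -- the polynomial attached to an integer vector
  set Pa : (Fin (n+1) → ℤ) → ℤ[X] :=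
    fun a => ∑ j : Fin (n+1), Polynomial.C (a j) * Polynomial.X ^ (j : ℕ) with hPa
  -- the reduction homomorphism
  have hadd : ∀ a a' : Fin (n+1) → ℤ,
      (fun i : Fin (n+1) => PadicInt.toZModPow (b i)
          (Polynomial.aeval x (Polynomial.hasseDeriv (i : ℕ) (Pa (a + a'))))) =
      (fun i => PadicInt.toZModPow (b i)
          (Polynomial.aeval x (Polynomial.hasseDeriv (i : ℕ) (Pa a)))) +
      (fun i => PadicInt.toZModPow (b i)
          (Polynomial.aeval x (Polynomial.hasseDeriv (i : ℕ) (Pa a')))) := by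
    intro a a'
    funext i
    have : Pa (a + a') = Pa a + Pa a' := by
      simp [hPa, add_mul, Finset.sum_add_distrib]
    simp [this, map_add]
  set φ : (Fin (n+1) → ℤ) →+ (∀ i : Fin (n+1), ZMod (p ^ b i)) :=
    { toFun := fun a i => PadicInt.toZModPow (b i)
        (Polynomial.aeval x (Polynomial.hasseDeriv (i : ℕ) (Pa a)))
      map_zero' := by
        funext i
        simp [hPa]
      map_add' := hadd } with hφ
  refine ⟨φ.ker, ?_, ?_⟩
  · intro a
    rw [AddMonoidHom.mem_ker, funext_iff]
    apply forall_congr'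
    intro i
    rw [PadicInt.norm_le_pow_iff_mem_span_pow, ← PadicInt.ker_toZModPow, RingHom.mem_ker]
    exact Iff.rfl
  · -- index computation
    have hsurj : Function.Surjective φ := by
      intro c
      set B : ℕ := Finset.univ.sup b with hB
      have hbB : ∀ i : Fin (n+1), b i ≤ B := fun i => Finset.le_sup (Finset.mem_univ i)
      -- key approximation
      have key : ∀ z : ℤ_[p],
          (p : ℤ_[p]) ^ B ∣ (((PadicInt.toZModPow B z).val : ℤ) : ℤ_[p]) - z := by
        intro z
        haveI : NeZero (p ^ B) := ⟨pow_ne_zero _ hp.ne_zero⟩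
        rw [← Ideal.mem_span_singleton, ← PadicInt.ker_toZModPow, RingHom.mem_ker,
          RingHom.map_sub, map_intCast, Int.cast_natCast,
          ZMod.natCast_rightInverse ((PadicInt.toZModPow B) z), sub_self]
      set R : ℤ_[p][X] :=
        ∑ i : Fin (n+1), Polynomial.C (((c i).val : ℤ_[p])) * Polynomial.X ^ (i : ℕ) with hR
      set P' : ℤ_[p][X] := Polynomial.taylor (-x) R with hP'
      set a : Fin (n+1) → ℤ := fun j => ((PadicInt.toZModPow B (P'.coeff j)).val : ℤ) with ha
      refine ⟨a, ?_⟩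
      set Q : ℤ_[p][X] := (Pa a).map (Int.castRingHom ℤ_[p]) with hQ
      have hPdeg : ∀ m : ℕ, n + 1 ≤ m → P'.coeff m = 0 := by
        intro m hm
        apply Polynomial.coeff_eq_zero_of_natDegree_lt
        rw [hP', Polynomial.natDegree_taylor]
        calc R.natDegree ≤ n := by
              apply Polynomial.natDegree_sum_le_of_forall_le
              intro j _
              apply le_trans (Polynomial.natDegree_C_mul_le _ _)
              simpa using Nat.lt_succ_iff.mp j.isLt
          _ < m := by omega
      have hdvd : Polynomial.C ((p : ℤ_[p]) ^ B) ∣ Q - P' := by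
        rw [Polynomial.C_dvd_iff_dvd_coeff]
        intro m
        rw [Polynomial.coeff_sub, hQ, Polynomial.coeff_map]
        rw [hPa, coeff_sum_fin']
        by_cases hm : m < n + 1
        · rw [dif_pos hm]
          have : P'.coeff m = P'.coeff ((⟨m, hm⟩ : Fin (n+1)) : ℕ) := rfl
          rw [this, ha]
          exact key _
        · rw [dif_neg hm, hPdeg m (by omega)]
          simp
      obtain ⟨S, hS⟩ := hdvd
      have htay : Polynomial.taylor x P' = R := by
        rw [hP', Polynomial.taylor_taylor, add_neg_cancel, Polynomial.taylor_zero]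
      funext i
      have haeval : Polynomial.aeval x (Polynomial.hasseDeriv (i : ℕ) (Pa a)) =
          (Polynomial.taylor x Q).coeff (i : ℕ) := by
        rw [Polynomial.taylor_coeff]
        rw [hQ, ← hasseDeriv_map']
        rw [Polynomial.eval_map]
        rw [Polynomial.aeval_def]
        norm_num
      have hdiff : (p : ℤ_[p]) ^ (b i) ∣
          (Polynomial.taylor x Q).coeff (i : ℕ) - R.coeff (i : ℕ) := by
        have : Polynomial.taylor x Q - Polynomial.taylor x P' =
            Polynomial.C ((p : ℤ_[p]) ^ B) * Polynomial.taylor x S := by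
          rw [← map_sub, hS, Polynomial.taylor_mul, Polynomial.taylor_C]
        have h2 : (Polynomial.taylor x Q).coeff (i : ℕ) - R.coeff (i : ℕ) =
            ((p : ℤ_[p]) ^ B) * (Polynomial.taylor x S).coeff (i : ℕ) := by
          rw [← htay, ← Polynomial.coeff_sub, this, Polynomial.coeff_C_mul]
        rw [h2]
        exact Dvd.dvd.mul_right (pow_dvd_pow _ (hbB i)) _
      have hRc : R.coeff (i : ℕ) = ((c i).val : ℤ_[p]) := by
        rw [hR, coeff_sum_fin', dif_pos i.isLt]
      show PadicInt.toZModPow (b i) _ = c i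
      rw [haeval, toZModPow_eq_of_dvd hdiff, hRc]
      rw [map_natCast]
      exact ZMod.natCast_rightInverse (c i)
    rw [AddSubgroup.index_ker]
    have : φ.range = ⊤ := AddMonoidHom.range_eq_top.mpr hsurj
    rw [this]
    calc Nat.card (⊤ : AddSubgroup (∀ i : Fin (n+1), ZMod (p ^ b i)))
        = Nat.card (∀ i : Fin (n+1), ZMod (p ^ b i)) :=
          Nat.card_congr AddSubgroup.topEquiv.toEquiv
      _ = ∏ i : Fin (n+1), Nat.card (ZMod (p ^ b i)) := Nat.card_pi
      _ = ∏ i : Fin (n+1), p ^ b i := by simp [Nat.card_zmod]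
end

section
/- Let p be a prime and n ≥ 1. For 0 ≤ i ≤ n let g_i and d be (positive) integer powers of p such that ∏_{i=0}^{n} (|g_i|_p · d) = 1, where |g_i|_p = g_i^{−1}. Suppose there are parameters s₁, …, s_n ≥ s₀ := 1 such that s_i g_i ≤ s_{i+1} g_{i+1} for 0 ≤ i ≤ n−1. Then for all 1 ≤ k ≤ n, ( ∏_{i=0}^{k−1} d |g_i|_p )^{−1} ≤ max{ 1/(d |g₀|_p), |g_n|_p · d · ∏_{i=1}^{n−1} s_i }. -/
/-!
Write `aᵢ = d |gᵢ|_p`, so that `∏_{i ≤ n} aᵢ = 1`. If `gⱼ < d`, i.e. `aⱼ > 1`, for every `j < k`,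
then the partial product `∏_{i < k} aᵢ` is at least `a₀`. Otherwise some `j < k` has `d ≤ gⱼ`,
and monotonicity of `sᵢ gᵢ` gives `d ≤ sⱼ gⱼ ≤ sᵢ gᵢ`, i.e. `aᵢ ≤ sᵢ`, for all `i ≥ k`; the
inverse of the partial product is the complementary product `∏_{k ≤ i ≤ n} aᵢ`, which is then at
most `aₙ ∏_{1 ≤ i < n} sᵢ`.
-/

open Finset

lemma inv_prod_range_eq_prod_Ico {M : Type*} [DivisionCommMonoid M] {a : ℕ → M} {k n : ℕ}
    (hkn : k ≤ n) (hprod : ∏ i ∈ range n, a i = 1) :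
    (∏ i ∈ range k, a i)⁻¹ = ∏ i ∈ Ico k n, a i :=
  inv_eq_of_mul_eq_one_right (by rwa [prod_range_mul_prod_Ico _ hkn])

section OrderedField

variable {K : Type*} [Field K] [LinearOrder K] [IsStrictOrderedRing K] {a s : ℕ → K} {k n : ℕ}

lemma inv_prod_range_le_inv_of_one_le (hk : 1 ≤ k) (ha0 : 0 < a 0)
    (ha : ∀ i ∈ Ico 1 k, 1 ≤ a i) : (∏ i ∈ range k, a i)⁻¹ ≤ (a 0)⁻¹ := by
  apply inv_anti₀ ha0
  rw [prod_range_eq_mul_Ico _ hk]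
  exact le_mul_of_one_le_right ha0.le (one_le_prod ha)

lemma inv_prod_range_le_mul_prod_Ico (hk : 1 ≤ k) (hkn : k ≤ n)
    (hprod : ∏ i ∈ range (n + 1), a i = 1) (ha : ∀ i ≤ n, 0 ≤ a i)
    (has : ∀ i ∈ Ico k n, a i ≤ s i) (hs : ∀ i ∈ Ico 1 n, 1 ≤ s i) :
    (∏ i ∈ range k, a i)⁻¹ ≤ a n * ∏ i ∈ Ico 1 n, s i := by
  have ha' : ∀ i ∈ Ico k n, 0 ≤ a i := fun i hi => ha i (mem_Ico.1 hi).2.le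
  have htail : ∏ i ∈ Ico k n, a i ≤ ∏ i ∈ Ico 1 n, s i :=
    (prod_le_prod ha' has).trans <| prod_le_prod_of_subset_of_one_le (Ico_subset_Ico_left hk)
      (fun i hi => (ha' i hi).trans (has i hi)) fun i hi _ => hs i hi
  rw [inv_prod_range_eq_prod_Ico (by omega) hprod, prod_Ico_succ_top hkn, mul_comm (a n)]
  exact mul_le_mul_of_nonneg_right htail (ha n le_rfl)

end OrderedField

theorem stmt9_general (p : ℕ) (hp : p.Prime) (n : ℕ)
    (g : ℕ → ℝ) (d : ℝ)
    (hg : ∀ i ≤ n, ∃ m : ℤ, g i = (p : ℝ) ^ m)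
    (hd : ∃ m : ℤ, d = (p : ℝ) ^ m)
    (hprod : ∏ i ∈ Finset.range (n + 1), ((g i)⁻¹ * d) = 1)
    (s : ℕ → ℝ) (hs0 : s 0 = 1) (hs : ∀ i, 1 ≤ i → i ≤ n → 1 ≤ s i)
    (hmono : ∀ i < n, s i * g i ≤ s (i + 1) * g (i + 1)) :
    ∀ k, 1 ≤ k → k ≤ n →
      (∏ i ∈ Finset.range k, (d * (g i)⁻¹))⁻¹ ≤
        max (d * (g 0)⁻¹)⁻¹ ((g n)⁻¹ * d * ∏ i ∈ Finset.Ico 1 n, s i) := by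
  intro k hk hkn
  have hp0 : (0 : ℝ) < p := by exact_mod_cast hp.pos
  have hg0 : ∀ i ≤ n, 0 < g i := fun i hi => by
    obtain ⟨m, hm⟩ := hg i hi
    exact hm ▸ zpow_pos hp0 m
  have hd0 : 0 < d := by
    obtain ⟨m, hm⟩ := hd
    exact hm ▸ zpow_pos hp0 m
  have hs1 : ∀ i ≤ n, 1 ≤ s i := fun i hi =>
    i.eq_zero_or_pos.elim (fun h => h ▸ hs0.ge) fun h => hs i h hi
  have hsg : MonotoneOn (fun i => s i * g i) (Set.Iic n) :=
    monotoneOn_of_le_add_one Set.ordConnected_Iic fun i _ _ hi => hmono i hi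
  by_cases hsmall : ∀ j < k, g j < d
  · refine le_max_of_le_left <| inv_prod_range_le_inv_of_one_le hk
      (mul_pos hd0 (inv_pos.2 (hg0 0 (by omega)))) fun i hi => ?_
    have hi := mem_Ico.1 hi
    rw [le_mul_inv_iff₀ (hg0 i (by omega)), one_mul]
    exact (hsmall i hi.2).le
  · push Not at hsmall
    obtain ⟨j, hjk, hdj⟩ := hsmall
    rw [mul_comm (g n)⁻¹]
    refine le_max_of_le_right <| inv_prod_range_le_mul_prod_Ico hk hkn
      (by simpa only [mul_comm] using hprod) (fun i hi => (mul_pos hd0 (inv_pos.2 (hg0 i hi))).le)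
      (fun i hi => ?_) fun i hi => hs i (mem_Ico.1 hi).1 (mem_Ico.1 hi).2.le
    have hi := mem_Ico.1 hi
    rw [mul_inv_le_iff₀ (hg0 i (by omega))]
    calc d ≤ g j := hdj
      _ ≤ s j * g j := le_mul_of_one_le_left (hg0 j (by omega)).le (hs1 j (by omega))
      _ ≤ s i * g i := hsg (Set.mem_Iic.2 (by omega)) (Set.mem_Iic.2 (by omega)) (by omega)

/-- Let `p` be a prime and `n ≥ 1`. For `0 ≤ i ≤ n` let `g_i` and `d` be
(positive) integer powers of `p` such that `∏_{i=0}^{n} (|g_i|_p · d) = 1`, where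
`|g_i|_p = g_i⁻¹`. Suppose there are parameters `s₁, …, s_n ≥ s₀ := 1` such that
`s_i g_i ≤ s_{i+1} g_{i+1}` for `0 ≤ i ≤ n−1`. Then for all `1 ≤ k ≤ n`,
`(∏_{i=0}^{k−1} d |g_i|_p)⁻¹ ≤ max { 1/(d |g₀|_p), |g_n|_p · d · ∏_{i=1}^{n−1} s_i }`. -/
theorem stmt9 (p : ℕ) (hp : p.Prime) (n : ℕ) (hn : 1 ≤ n)
    (g : ℕ → ℝ) (d : ℝ)
    (hg : ∀ i ≤ n, ∃ m : ℤ, g i = (p : ℝ) ^ m)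
    (hd : ∃ m : ℤ, d = (p : ℝ) ^ m)
    (hprod : ∏ i ∈ Finset.range (n + 1), ((g i)⁻¹ * d) = 1)
    (s : ℕ → ℝ) (hs0 : s 0 = 1) (hs : ∀ i, 1 ≤ i → i ≤ n → 1 ≤ s i)
    (hmono : ∀ i < n, s i * g i ≤ s (i + 1) * g (i + 1)) :
    ∀ k, 1 ≤ k → k ≤ n →
      (∏ i ∈ Finset.range k, (d * (g i)⁻¹))⁻¹ ≤
        max (d * (g 0)⁻¹)⁻¹ ((g n)⁻¹ * d * ∏ i ∈ Finset.Ico 1 n, s i) :=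
  stmt9_general p hp n g d hg hd hprod s hs0 hs hmono
end

section
/- Let n ≥ 2, 0 < δ < 1, C₂ ≥ 1, Q > 1, 0 < v ≤ 1, and let ξ₀, …, ξ_n be positive reals with 0 < ξ₀ ≤ ξ₁ ≤ ⋯ ≤ ξ_n = 1, ∏_{i=0}^{n} ξ_i = Q^{−(n+1)}, and ξ₀ ≤ Q^{−1−v}. Fix i' ∈ {0, …, n} and define δ_i := δ^{2(n+1)} C₂^{−(n+1)} if i = i' and δ_i := 1 otherwise. Then for every 1 ≤ k ≤ n, ∏_{i=0}^{k−1} ( δ² / (Q δ_i ξ_i) ) ≥ Q^{v} δ^{4n+2} C₂^{−2n−2}. (Here δ²/(Q δ_i ξ_i) = d|g_i|_p for |g_i|_p = δ/(δ_i ξ_i) and d = δ/Q.) -/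
/-! Since `ξ` is nondecreasing, the geometric mean of `ξ₁, …, ξ_{k-1}` is at most that of
`ξ₁, …, ξ_{n-1}`, whose product is `Q^{-(n+1)} / ξ₀`. Combined with `ξ₀ ≤ Q^{-1-v}` and `v ≤ 1`
this gives `∏_{i<k} ξ_i ≤ Q^{-(k+v)}`. As `δ_i ≤ 1`, the product in question is then at least
`δ^{2k} Q^v ≥ δ^{4n+2} Q^v`, and `C₂^{-2n-2} ≤ 1`. -/

open Finset

theorem prod_range_pow_le_pow_prod_range {R : Type*} [CommSemiring R] [PartialOrder R]
    [IsOrderedRing R] {f : ℕ → R} {k n : ℕ} (hf : MonotoneOn f (Set.Iio n))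
    (hf0 : ∀ i < n, 0 ≤ f i) (hkn : k ≤ n) :
    (∏ i ∈ range k, f i) ^ n ≤ (∏ i ∈ range n, f i) ^ k := by
  rcases hkn.eq_or_lt with rfl | hkn
  · rfl
  have hP0 : 0 ≤ ∏ i ∈ range k, f i := prod_nonneg fun i hi => hf0 i (by simp at hi; omega)
  have hP : ∏ i ∈ range k, f i ≤ f k ^ k := by
    simpa using prod_le_prod (s := range k) (g := fun _ => f k)
      (fun i hi => hf0 i (by simp at hi; omega))
      (fun i hi => hf (by simp at hi ⊢; omega) hkn (by simp at hi; omega))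
  have hR : f k ^ (n - k) ≤ ∏ i ∈ Ico k n, f i := by
    simpa using prod_le_prod (s := Ico k n) (f := fun _ => f k)
      (fun _ _ => hf0 k hkn)
      (fun i hi => hf hkn (by simp at hi ⊢; omega) (by simp at hi; omega))
  calc (∏ i ∈ range k, f i) ^ n
      = (∏ i ∈ range k, f i) ^ k * (∏ i ∈ range k, f i) ^ (n - k) := by
        rw [← pow_add, Nat.add_sub_cancel' hkn.le]
    _ ≤ (∏ i ∈ range k, f i) ^ k * (f k ^ (n - k)) ^ k := by
        rw [← pow_mul, mul_comm (n - k), pow_mul]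
        gcongr
    _ ≤ (∏ i ∈ range k, f i) ^ k * (∏ i ∈ Ico k n, f i) ^ k := by
        gcongr
        exact pow_nonneg (hf0 k hkn) _
    _ = (∏ i ∈ range n, f i) ^ k := by
        rw [← mul_pow, prod_range_mul_prod_Ico f hkn.le]

theorem prod_range_le_rpow_of_monotoneOn {ξ : ℕ → ℝ} {n k : ℕ} {Q v : ℝ} (hQ : 1 < Q)
    (hv : v ≤ 1) (hξ : MonotoneOn ξ (Set.Iio n)) (hpos : 0 < ξ 0)
    (hprod : ∏ i ∈ range n, ξ i ≤ Q ^ (-((n : ℝ) + 1))) (hfirst : ξ 0 ≤ Q ^ (-(1 + v)))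
    (hk : 1 ≤ k) (hkn : k ≤ n) :
    ∏ i ∈ range k, ξ i ≤ Q ^ (-((k : ℝ) + v)) := by
  obtain ⟨j, rfl⟩ : ∃ j, k = j + 1 := ⟨k - 1, by omega⟩
  obtain ⟨m, rfl⟩ : ∃ m, n = m + 1 := ⟨n - 1, by omega⟩
  rcases Nat.eq_zero_or_pos j with rfl | hj
  · simpa [add_comm v] using hfirst
  have hξpos : ∀ i < m + 1, 0 < ξ i := fun i hi =>
    hpos.trans_le (hξ (by simp) hi (Nat.zero_le i))
  set A := ∏ i ∈ range j, ξ (i + 1)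
  set B := ∏ i ∈ range m, ξ (i + 1)
  have hA : A ^ m ≤ B ^ j := prod_range_pow_le_pow_prod_range
    (fun a ha b hb hab => hξ (by simp at ha ⊢; omega) (by simp at hb ⊢; omega) (by omega))
    (fun i hi => (hξpos (i + 1) (by omega)).le) (by omega)
  have hB : ξ 0 * B ≤ Q ^ (-((m + 1 : ℕ) + 1 : ℝ)) := by
    rwa [prod_range_succ', mul_comm] at hprod
  have hQ0 : 0 < Q := one_pos.trans hQ
  have hexp : (Q ^ (-(1 + v))) ^ (m - j) * (Q ^ (-((m + 1 : ℕ) + 1 : ℝ))) ^ j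
      ≤ (Q ^ (-((j + 1 : ℕ) + v))) ^ m := by
    simp only [← Real.rpow_natCast, ← Real.rpow_mul hQ0.le, ← Real.rpow_add hQ0]
    rw [Real.rpow_le_rpow_left_iff hQ, Nat.cast_sub (by omega : j ≤ m)]
    push_cast
    -- the two exponents differ by `j * (1 - v)`
    nlinarith [mul_nonneg (Nat.cast_nonneg j : (0 : ℝ) ≤ j) (sub_nonneg.2 hv)]
  rw [prod_range_succ']
  refine le_of_pow_le_pow_left₀ (by omega : m ≠ 0) (by positivity) ?_
  calc (A * ξ 0) ^ m = ξ 0 ^ m * A ^ m := by ring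
    _ ≤ ξ 0 ^ m * B ^ j := by gcongr
    _ = ξ 0 ^ (m - j) * (ξ 0 * B) ^ j := by
        rw [mul_pow, ← mul_assoc, ← pow_add, Nat.sub_add_cancel (by omega)]
    _ ≤ (Q ^ (-(1 + v))) ^ (m - j) * (Q ^ (-((m + 1 : ℕ) + 1 : ℝ))) ^ j := by
        have hB0 : 0 ≤ B := prod_nonneg fun i hi => (hξpos _ (by simp at hi; omega)).le
        gcongr
    _ ≤ _ := hexp

theorem rpow_mul_pow_le_prod_div {c Q v : ℝ} {k : ℕ} {w ξ : ℕ → ℝ} (hc : 0 ≤ c) (hQ : 0 < Q)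
    (hw0 : ∀ i < k, 0 < w i) (hw1 : ∀ i < k, w i ≤ 1) (hξ : ∀ i < k, 0 < ξ i)
    (hP : ∏ i ∈ range k, ξ i ≤ Q ^ (-((k : ℝ) + v))) :
    Q ^ v * c ^ k ≤ ∏ i ∈ range k, c / (Q * w i * ξ i) := by
  have hW0 : 0 < ∏ i ∈ range k, w i := prod_pos fun i hi => hw0 i (by simpa using hi)
  have hW1 : ∏ i ∈ range k, w i ≤ 1 :=
    prod_le_one (fun i hi => (hw0 i (by simpa using hi)).le) fun i hi => hw1 i (by simpa using hi)
  have hP0 : 0 < ∏ i ∈ range k, ξ i := prod_pos fun i hi => hξ i (by simpa using hi)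
  have hQk : Q ^ v * Q ^ k * Q ^ (-((k : ℝ) + v)) = 1 := by
    rw [← Real.rpow_natCast, ← Real.rpow_add hQ, ← Real.rpow_add hQ]
    ring_nf
    exact Real.rpow_zero Q
  rw [prod_div_distrib, prod_mul_distrib, prod_mul_distrib, prod_const, prod_const, card_range,
    le_div_iff₀ (by positivity)]
  calc Q ^ v * c ^ k * ((Q ^ k * ∏ i ∈ range k, w i) * ∏ i ∈ range k, ξ i)
      ≤ Q ^ v * c ^ k * (Q ^ k * 1 * Q ^ (-((k : ℝ) + v))) := by gcongr
    _ = c ^ k := by linear_combination c ^ k * hQk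

theorem stmt11_general (n : ℕ) (δ C₂ Q v : ℝ) (hδ0 : 0 < δ) (hδ1 : δ < 1)
    (hC₂ : 1 ≤ C₂) (hQ : 1 < Q) (hv1 : v ≤ 1)
    (ξ : ℕ → ℝ) (hpos : 0 < ξ 0)
    (hmono : ∀ i < n, ξ i ≤ ξ (i + 1)) (hlast : ξ n = 1)
    (hprod : ∏ i ∈ Finset.range (n + 1), ξ i = Q ^ (-((n : ℝ) + 1)))
    (hfirst : ξ 0 ≤ Q ^ (-(1 + v)))
    (i' : ℕ) (δi : ℕ → ℝ)
    (hδi : ∀ i, δi i = if i = i' then δ ^ (2 * (n + 1)) * C₂ ^ (-((n : ℤ) + 1)) else 1) :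
    ∀ k, 1 ≤ k → k ≤ n →
      Q ^ v * δ ^ (4 * n + 2) * C₂ ^ (-(2 * (n : ℤ) + 2)) ≤
        ∏ i ∈ Finset.range k, (δ ^ 2 / (Q * δi i * ξ i)) := by
  intro k hk hkn
  have hξ : MonotoneOn ξ (Set.Iic n) := monotoneOn_of_le_add_one Set.ordConnected_Iic
    fun i _ _ hi => hmono i (Nat.lt_of_succ_le hi)
  have hP : ∏ i ∈ range k, ξ i ≤ Q ^ (-((k : ℝ) + v)) := by
    refine prod_range_le_rpow_of_monotoneOn hQ hv1 (hξ.mono Set.Iio_subset_Iic_self) hpos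
      ?_ hfirst hk hkn
    rw [← hprod, prod_range_succ, hlast, mul_one]
  have hδi0 : ∀ i, 0 < δi i := fun i => by rw [hδi]; split_ifs <;> positivity
  have hδi1 : ∀ i, δi i ≤ 1 := fun i => by
    rw [hδi]
    split_ifs
    · exact mul_le_one₀ (pow_le_one₀ hδ0.le hδ1.le) (by positivity)
        (zpow_le_one_of_nonpos₀ hC₂ (by omega))
    · rfl
  calc Q ^ v * δ ^ (4 * n + 2) * C₂ ^ (-(2 * (n : ℤ) + 2))
      ≤ Q ^ v * δ ^ (2 * k) * 1 := by
        gcongr Q ^ v * ?_ * ?_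
        · exact pow_le_pow_of_le_one hδ0.le hδ1.le (by omega)
        · exact zpow_le_one_of_nonpos₀ hC₂ (by omega)
    _ ≤ ∏ i ∈ range k, (δ ^ 2 / (Q * δi i * ξ i)) := by
      rw [mul_one, pow_mul]
      exact rpow_mul_pow_le_prod_div (by positivity) (by linarith) (fun i _ => hδi0 i)
        (fun i _ => hδi1 i) (fun i hi => hpos.trans_le (hξ (by simp) (by simp; omega) i.zero_le))
        hP

/-- Let `n ≥ 2`, `0 < δ < 1`, `C₂ ≥ 1`, `Q > 1`, `0 < v ≤ 1`, and let
`ξ₀, …, ξ_n` be positive reals with `ξ₀ ≤ ⋯ ≤ ξ_n = 1`, `∏ ξ_i = Q^{−(n+1)}` and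
`ξ₀ ≤ Q^{−1−v}`. Fix `i' ∈ {0, …, n}` and define `δ_i := δ^{2(n+1)} C₂^{−(n+1)}` if `i = i'`
and `δ_i := 1` otherwise. Then for every `1 ≤ k ≤ n`,
`∏_{i=0}^{k−1} (δ² / (Q δ_i ξ_i)) ≥ Q^v δ^{4n+2} C₂^{−2n−2}`. -/
theorem stmt11 (n : ℕ) (hn : 2 ≤ n) (δ C₂ Q v : ℝ) (hδ0 : 0 < δ) (hδ1 : δ < 1)
    (hC₂ : 1 ≤ C₂) (hQ : 1 < Q) (hv0 : 0 < v) (hv1 : v ≤ 1)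
    (ξ : ℕ → ℝ) (hpos : 0 < ξ 0)
    (hmono : ∀ i < n, ξ i ≤ ξ (i + 1)) (hlast : ξ n = 1)
    (hprod : ∏ i ∈ Finset.range (n + 1), ξ i = Q ^ (-((n : ℝ) + 1)))
    (hfirst : ξ 0 ≤ Q ^ (-(1 + v)))
    (i' : ℕ) (hi' : i' ≤ n) (δi : ℕ → ℝ)
    (hδi : ∀ i, δi i = if i = i' then δ ^ (2 * (n + 1)) * C₂ ^ (-((n : ℤ) + 1)) else 1) :
    ∀ k, 1 ≤ k → k ≤ n →
      Q ^ v * δ ^ (4 * n + 2) * C₂ ^ (-(2 * (n : ℤ) + 2)) ≤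
        ∏ i ∈ Finset.range k, (δ ^ 2 / (Q * δi i * ξ i)) :=
  stmt11_general n δ C₂ Q v hδ0 hδ1 hC₂ hQ hv1 ξ hpos hmono hlast hprod hfirst i' δi hδi
end

section
/- Let p be a prime, x ∈ ℤ_p, and let P ∈ ℤ_p[X] be a polynomial of degree n ≥ 2 with leading coefficient a_n and roots α₁, …, α_n in the algebraic closure of ℚ_p (with multiplicity), ordered so that |x − α₁|_p ≤ |x − α₂|_p ≤ ⋯ ≤ |x − α_n|_p. Then for every 0 ≤ j < n, |(1/j!) P^{(j)}(x)|_p ≤ |a_n|_p · ∏_{i=j+1}^{n} |x − α_i|_p. Moreover, if 1 ≤ j < n and |x − α_j|_p < |x − α_{j+1}|_p, then equality holds: |(1/j!) P^{(j)}(x)|_p = |a_n|_p · ∏_{i=j+1}^{n} |x − α_i|_p. -/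
open Polynomial Finset

private lemma stmt13_aux_prod_le {ι : Type*} (g : ι → ℝ) (hg : ∀ i, 0 ≤ g i)
    (A B : Finset ι) (hcard : #A = #B) (h : ∀ a ∈ A, ∀ b ∈ B, g a ≤ g b) :
    ∏ a ∈ A, g a ≤ ∏ b ∈ B, g b := by
  rcases B.eq_empty_or_nonempty with hB | hB
  · subst hB; simp at hcard; simp [hcard]
  · have hm : 0 ≤ B.inf' hB g := by
      obtain ⟨b, hb, hbe⟩ := Finset.exists_mem_eq_inf' hB g
      rw [hbe]; exact hg b
    calc ∏ a ∈ A, g a ≤ ∏ a ∈ A, B.inf' hB g :=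
        Finset.prod_le_prod (fun a _ => hg a)
          (fun a ha => Finset.le_inf' _ _ (fun b hb => h a ha b hb))
      _ = (B.inf' hB g) ^ #A := by rw [Finset.prod_const]
      _ = (B.inf' hB g) ^ #B := by rw [hcard]
      _ = ∏ _b ∈ B, B.inf' hB g := by rw [Finset.prod_const]
      _ ≤ ∏ b ∈ B, g b :=
        Finset.prod_le_prod (fun b _ => hm) (fun b hb => Finset.inf'_le _ hb)

private lemma stmt13_aux_prod_lt {ι : Type*} (g : ι → ℝ) (hg : ∀ i, 0 ≤ g i)
    (A B : Finset ι) (hA : A.Nonempty) (hcard : #A = #B)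
    (h : ∀ a ∈ A, ∀ b ∈ B, g a < g b) :
    ∏ a ∈ A, g a < ∏ b ∈ B, g b := by
  have hB : B.Nonempty := by rw [← Finset.card_pos] at hA ⊢; omega
  obtain ⟨a₀, ha₀, ha₀eq⟩ := Finset.exists_mem_eq_sup' hA g
  have hsup0 : 0 ≤ A.sup' hA g := ha₀eq ▸ hg a₀
  have hm : 0 ≤ B.inf' hB g := by
    obtain ⟨b, hb, hbe⟩ := Finset.exists_mem_eq_inf' hB g
    rw [hbe]; exact hg b
  have hAne : #A ≠ 0 := by rw [← Finset.card_pos] at hA; omega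
  have h1 : ∏ a ∈ A, g a ≤ (A.sup' hA g) ^ #A := by
    rw [← Finset.prod_const]
    exact Finset.prod_le_prod (fun a _ => hg a) (fun a ha => Finset.le_sup' _ ha)
  have h3 : (B.inf' hB g) ^ #B ≤ ∏ b ∈ B, g b := by
    rw [← Finset.prod_const]
    exact Finset.prod_le_prod (fun b _ => hm) (fun b hb => Finset.inf'_le _ hb)
  have h2 : (A.sup' hA g) ^ #A < (B.inf' hB g) ^ #A := by
    refine pow_lt_pow_left₀ ?_ hsup0 hAne
    rw [ha₀eq, Finset.lt_inf'_iff]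
    exact fun b hb => h a₀ ha₀ b hb
  calc ∏ a ∈ A, g a ≤ (A.sup' hA g) ^ #A := h1
    _ < (B.inf' hB g) ^ #A := h2
    _ = (B.inf' hB g) ^ #B := by rw [hcard]
    _ ≤ ∏ b ∈ B, g b := h3

/-- Let `p` be a prime, `x ∈ ℤ_p`, and let `P ∈ ℤ_p[X]` of degree `n ≥ 2`
have leading coefficient `a_n` and roots `α₁, …, α_n` (with multiplicity) in the algebraic
closure of `ℚ_p`, ordered so that `|x − α₁|_p ≤ ⋯ ≤ |x − α_n|_p`. Then for every `0 ≤ j < n`,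
`|(1/j!) P⁽ʲ⁾(x)|_p ≤ |a_n|_p ∏_{i=j+1}^{n} |x − α_i|_p`, with equality whenever `1 ≤ j < n`
and `|x − α_j|_p < |x − α_{j+1}|_p`.

The algebraic closure of `ℚ_p` together with its (unique) extension of the `p`-adic absolute
value is modelled by an algebraically closed normed field `L`, algebraic over `ℚ_p`, whose
norm restricts to the `p`-adic norm on `ℚ_p`. -/
theorem stmt13 (p : ℕ) [Fact p.Prime]
    (L : Type*) [NormedField L] [Algebra ℚ_[p] L] [IsAlgClosed L]
    [Algebra.IsAlgebraic ℚ_[p] L]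
    (hL : ∀ y : ℚ_[p], ‖algebraMap ℚ_[p] L y‖ = ‖y‖)
    (x : ℤ_[p]) (n : ℕ) (hn : 2 ≤ n) (P : Polynomial ℤ_[p]) (hdeg : P.natDegree = n)
    (α : Fin n → L)
    (hfact : (P.map (algebraMap ℤ_[p] ℚ_[p])).map (algebraMap ℚ_[p] L) =
      Polynomial.C (algebraMap ℚ_[p] L (algebraMap ℤ_[p] ℚ_[p] P.leadingCoeff)) *
        ∏ i : Fin n, (Polynomial.X - Polynomial.C (α i)))
    (hord : ∀ i j : Fin n, i ≤ j →
      ‖algebraMap ℚ_[p] L (x : ℚ_[p]) - α i‖ ≤ ‖algebraMap ℚ_[p] L (x : ℚ_[p]) - α j‖) :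
    (∀ j : ℕ, j < n →
      ‖Polynomial.eval x (Polynomial.hasseDeriv j P)‖ ≤
        ‖P.leadingCoeff‖ *
          ∏ i ∈ Finset.univ.filter (fun i : Fin n => j ≤ (i : ℕ)),
            ‖algebraMap ℚ_[p] L (x : ℚ_[p]) - α i‖) ∧
    (∀ j : ℕ, 1 ≤ j → ∀ hj : j < n,
      ‖algebraMap ℚ_[p] L (x : ℚ_[p]) - α ⟨j - 1, by omega⟩‖ <
        ‖algebraMap ℚ_[p] L (x : ℚ_[p]) - α ⟨j, hj⟩‖ →
      ‖Polynomial.eval x (Polynomial.hasseDeriv j P)‖ =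
        ‖P.leadingCoeff‖ *
          ∏ i ∈ Finset.univ.filter (fun i : Fin n => j ≤ (i : ℕ)),
            ‖algebraMap ℚ_[p] L (x : ℚ_[p]) - α i‖) := by
  classical
  haveI hultra : IsUltrametricDist L := by
    apply IsUltrametricDist.isUltrametricDist_of_forall_norm_natCast_le_one
    intro m
    rw [← map_natCast (algebraMap ℚ_[p] L) m, hL]
    have : ((m : ℚ_[p])) = (((m : ℤ_[p]) : ℚ_[p])) := by push_cast; ring
    rw [this, PadicInt.padic_norm_e_of_padicInt]
    exact PadicInt.norm_le_one _
  set f : ℤ_[p] →+* L := ((algebraMap ℚ_[p] L) : ℚ_[p] →+* L).comp (algebraMap ℤ_[p] ℚ_[p]) with hf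
  set x' : L := algebraMap ℚ_[p] L (x : ℚ_[p]) with hx'
  set g : Fin n → ℝ := fun i => ‖x' - α i‖ with hg
  have hgnn : ∀ i, 0 ≤ g i := fun i => norm_nonneg _
  have hfnorm : ∀ a : ℤ_[p], ‖f a‖ = ‖a‖ := by
    intro a
    rw [hf, RingHom.comp_apply, hL, PadicInt.algebraMap_apply, PadicInt.padic_norm_e_of_padicInt]
  have hfx : f x = x' := by rw [hf, RingHom.comp_apply, PadicInt.algebraMap_apply, hx']
  have hQ : P.map f = C (f P.leadingCoeff) * ∏ i : Fin n, (X - C (α i)) := by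
    rw [hf, ← Polynomial.map_map]
    exact hfact
  have keyval : ∀ j : ℕ, j ≤ n →
      f (Polynomial.eval x (Polynomial.hasseDeriv j P)) =
        f P.leadingCoeff *
          ∑ t ∈ Finset.univ.powersetCard (n - j), ∏ i ∈ t, (x' - α i) := by
    intro j hj
    have h1 : f (Polynomial.eval x (Polynomial.hasseDeriv j P)) =
        Polynomial.eval x' ((Polynomial.hasseDeriv j P).map f) := by
      rw [Polynomial.eval_map, ← hfx, Polynomial.eval₂_hom]
    have h2 : (Polynomial.hasseDeriv j P).map f = Polynomial.hasseDeriv j (P.map f) := by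
      ext i
      simp [Polynomial.hasseDeriv_coeff, Polynomial.coeff_map]
    have h3 : Polynomial.taylor x' (P.map f) =
        C (f P.leadingCoeff) * ∏ i : Fin n, (X + C (x' - α i)) := by
      rw [hQ, Polynomial.taylor_apply]
      simp only [mul_comp, Polynomial.prod_comp, sub_comp, add_comp, X_comp, C_comp]
      congr 1
      refine Finset.prod_congr rfl fun i _ => ?_
      rw [map_sub C]
      ring
    rw [h1, h2, ← Polynomial.taylor_coeff, h3, Polynomial.coeff_C_mul,
      Finset.prod_X_add_C_coeff _ _ (by simpa using hj)]
    simp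
  have hTset : ∀ (j : ℕ) (hj : j < n),
      Finset.univ.filter (fun i : Fin n => j ≤ (i : ℕ)) = Finset.Ici (⟨j, hj⟩ : Fin n) := by
    intro j hj
    ext i
    simp [Fin.le_def]
  have hTcard : ∀ (j : ℕ) (hj : j < n),
      #(Finset.univ.filter (fun i : Fin n => j ≤ (i : ℕ))) = n - j := by
    intro j hj
    rw [hTset j hj, Fin.card_Ici]
  -- non-strict comparison
  have compare_le : ∀ (j : ℕ), j < n → ∀ t : Finset (Fin n), #t = n - j →
      ∏ i ∈ t, g i ≤ ∏ i ∈ Finset.univ.filter (fun i : Fin n => j ≤ (i : ℕ)), g i := by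
    intro j hj t ht
    set T := Finset.univ.filter (fun i : Fin n => j ≤ (i : ℕ)) with hT
    have hdc : #(t \ T) = #(T \ t) := Finset.card_sdiff_comm (by rw [ht, hTcard j hj])
    have hsub : ∏ i ∈ t \ T, g i ≤ ∏ i ∈ T \ t, g i := by
      refine stmt13_aux_prod_le g hgnn _ _ hdc ?_
      intro a ha b hb
      have ha' : ¬ j ≤ (a : ℕ) := by
        have := (Finset.mem_sdiff.mp ha).2
        simpa [hT] using this
      have hb' : j ≤ (b : ℕ) := by
        have := (Finset.mem_sdiff.mp hb).1
        simpa [hT] using this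
      exact hord a b (by omega)
    calc ∏ i ∈ t, g i = (∏ i ∈ t ∩ T, g i) * ∏ i ∈ t \ T, g i :=
        (Finset.prod_inter_mul_prod_diff t T g).symm
      _ ≤ (∏ i ∈ t ∩ T, g i) * ∏ i ∈ T \ t, g i :=
        mul_le_mul_of_nonneg_left hsub (Finset.prod_nonneg fun i _ => hgnn i)
      _ = (∏ i ∈ T ∩ t, g i) * ∏ i ∈ T \ t, g i := by rw [Finset.inter_comm]
      _ = ∏ i ∈ T, g i := Finset.prod_inter_mul_prod_diff T t g
  constructor
  · -- inequality
    intro j hj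
    have h0 := keyval j hj.le
    have hnorm : ‖Polynomial.eval x (Polynomial.hasseDeriv j P)‖ =
        ‖P.leadingCoeff‖ *
          ‖∑ t ∈ Finset.univ.powersetCard (n - j), ∏ i ∈ t, (x' - α i)‖ := by
      rw [← hfnorm, h0, norm_mul, hfnorm]
    rw [hnorm]
    refine mul_le_mul_of_nonneg_left ?_ (norm_nonneg _)
    refine IsUltrametricDist.norm_sum_le_of_forall_le_of_nonneg
      (Finset.prod_nonneg fun i _ => hgnn i) ?_
    intro t ht
    rw [norm_prod]
    exact compare_le j hj t (Finset.mem_powersetCard.mp ht).2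
  · -- equality
    intro j hj1 hj hlt
    set T := Finset.univ.filter (fun i : Fin n => j ≤ (i : ℕ)) with hT
    have hposT : ∀ b ∈ T, 0 < g b := by
      intro b hb
      have hb' : j ≤ (b : ℕ) := by simpa [hT] using hb
      calc (0:ℝ) ≤ g ⟨j - 1, by omega⟩ := hgnn _
        _ < g ⟨j, hj⟩ := hlt
        _ ≤ g b := hord _ b (by simpa [Fin.le_def] using hb')
    have hTpos : 0 < ∏ i ∈ T, g i := Finset.prod_pos hposT
    have compare_lt : ∀ t : Finset (Fin n), #t = n - j → t ≠ T →
        ∏ i ∈ t, g i < ∏ i ∈ T, g i := by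
      intro t ht htne
      have hdc : #(t \ T) = #(T \ t) := Finset.card_sdiff_comm (by rw [ht, hT, hTcard j hj])
      have hAne : (t \ T).Nonempty := by
        rw [Finset.sdiff_nonempty]
        intro hsub
        exact htne (Finset.eq_of_subset_of_card_le hsub (by rw [ht, hT, hTcard j hj]))
      have hstrict : ∏ i ∈ t \ T, g i < ∏ i ∈ T \ t, g i := by
        refine stmt13_aux_prod_lt g hgnn _ _ hAne hdc ?_
        intro a ha b hb
        have ha' : ¬ j ≤ (a : ℕ) := by
          have := (Finset.mem_sdiff.mp ha).2
          simpa [hT] using this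
        have hb' : j ≤ (b : ℕ) := by
          have := (Finset.mem_sdiff.mp hb).1
          simpa [hT] using this
        calc g a ≤ g ⟨j - 1, by omega⟩ := hord a _ (by simp [Fin.le_def]; omega)
          _ < g ⟨j, hj⟩ := hlt
          _ ≤ g b := hord _ b (by simpa [Fin.le_def] using hb')
      have hinterpos : 0 < ∏ i ∈ t ∩ T, g i :=
        Finset.prod_pos fun i hi => hposT i (Finset.mem_of_mem_inter_right hi)
      calc ∏ i ∈ t, g i = (∏ i ∈ t ∩ T, g i) * ∏ i ∈ t \ T, g i :=
          (Finset.prod_inter_mul_prod_diff t T g).symm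
        _ < (∏ i ∈ t ∩ T, g i) * ∏ i ∈ T \ t, g i :=
          (mul_lt_mul_iff_right₀ hinterpos).mpr hstrict
        _ = (∏ i ∈ T ∩ t, g i) * ∏ i ∈ T \ t, g i := by rw [Finset.inter_comm]
        _ = ∏ i ∈ T, g i := Finset.prod_inter_mul_prod_diff T t g
    have hTmem : T ∈ Finset.univ.powersetCard (n - j) :=
      Finset.mem_powersetCard.mpr ⟨Finset.subset_univ _, by rw [hT]; exact hTcard j hj⟩
    set F : Finset (Fin n) → L := fun t => ∏ i ∈ t, (x' - α i) with hF
    have hsplit : ∑ t ∈ Finset.univ.powersetCard (n - j), F t =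
        F T + ∑ t ∈ (Finset.univ.powersetCard (n - j)).erase T, F t :=
      (Finset.add_sum_erase _ F hTmem).symm
    have hnormFT : ‖F T‖ = ∏ i ∈ T, g i := by
      rw [hF]; exact norm_prod _ _
    have hrest : ‖∑ t ∈ (Finset.univ.powersetCard (n - j)).erase T, F t‖ < ‖F T‖ := by
      rw [hnormFT]
      rcases ((Finset.univ.powersetCard (n - j)).erase T).eq_empty_or_nonempty with he | he
      · rw [he]; simpa using hTpos
      · refine lt_of_le_of_lt (he.norm_sum_le_sup'_norm F) ?_
        rw [Finset.sup'_lt_iff]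
        intro t ht
        have ht1 : t ≠ T := (Finset.mem_erase.mp ht).1
        have ht2 : #t = n - j :=
          (Finset.mem_powersetCard.mp (Finset.mem_erase.mp ht).2).2
        calc ‖F t‖ = ∏ i ∈ t, g i := by rw [hF]; exact norm_prod _ _
          _ < ∏ i ∈ T, g i := compare_lt t ht2 ht1
    have hnormsum : ‖∑ t ∈ Finset.univ.powersetCard (n - j), F t‖ = ∏ i ∈ T, g i := by
      rw [hsplit, add_comm,
        IsUltrametricDist.norm_add_eq_max_of_norm_ne_norm (ne_of_lt hrest),
        max_eq_right hrest.le, hnormFT]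
    have h0 := keyval j hj.le
    rw [← hfnorm, h0, norm_mul, hfnorm, hnormsum]
end

section
/- Let p be a prime, x ∈ ℤ_p, Q > 1 and 0 < δ₀ ≤ 1. Let P ∈ ℤ[X] be a polynomial of degree n ≥ 2 with H(P) ≤ Q such that δ₀ Q^{−θ_i} ≤ |(1/i!) P^{(i)}(x)|_p ≤ Q^{−θ_i} for all 0 ≤ i ≤ n, for some real parameters θ₀, …, θ_n. Let α₁, …, α_n be the roots of P in the algebraic closure of ℚ_p (with multiplicity), ordered so that |x − α₁|_p ≤ ⋯ ≤ |x − α_n|_p, and define d_j := θ_{j−1} − θ_j for 1 ≤ j ≤ n. If d₁ ≥ d₂ ≥ ⋯ ≥ d_n ≥ 0, then |x − α_j|_p ≤ δ₀^{−1} Q^{−d_j} for every 1 ≤ j ≤ n. -/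
/-!
Write `β i = x - α i`. By Taylor expansion at `x`, the `k`-th Hasse derivative of `P` at `x` is
`c · e_{n-k}(β)`, where `c` is the leading coefficient and `e_m` the `m`-th elementary symmetric
function. In the ultrametric absolute value, `e_m(β)` is at most the product of the `m` largest
`|β i|`, with equality when a strict gap separates the `m` largest values from the others.

Fix `j` and `b = |β_j|`, and let `a < j` be the number of roots with `|β i| < b`. Comparing
the upper bound at level `j` with the exact value at level `a` gives
`b ^ (j - a) · |P^{[j]}(x)| ≤ |P^{[a]}(x)|`, hence `b ^ (j - a) ≤ δ₀⁻¹ Q ^ (θ_j - θ_a)`.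
Since `d` is non-increasing, `θ_a - θ_j = d_{a+1} + ⋯ + d_j ≥ (j - a) d_j`, and taking
`(j - a)`-th roots yields `b ≤ δ₀⁻¹ Q ^ (-d_j)`.
-/

open Polynomial

/-- The height of an integer polynomial: the maximum of the absolute values of its
coefficients. -/
def polyHeight (P : Polynomial ℤ) : ℕ :=
  (Finset.range (P.natDegree + 1)).sup fun i => (P.coeff i).natAbs

open Finset

namespace Polynomial

theorem hasseDeriv_map {R S : Type*} [Semiring R] [Semiring S] (f : R →+* S) (k : ℕ)
    (P : R[X]) : hasseDeriv k (P.map f) = (hasseDeriv k P).map f := by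
  ext m
  simp [hasseDeriv_coeff, coeff_map]

theorem eval_hasseDeriv_C_mul_prod_X_sub_C {K ι : Type*} [CommRing K] [Fintype ι] (c y : K)
    (α : ι → K) {k : ℕ} (hk : k ≤ Fintype.card ι) :
    (hasseDeriv k (C c * ∏ i, (X - C (α i)))).eval y =
      c * ∑ t ∈ powersetCard (Fintype.card ι - k) univ, ∏ i ∈ t, (y - α i) := by
  have htaylor : taylor y (C c * ∏ i, (X - C (α i))) = C c * ∏ i, (X + C (y - α i)) := by
    rw [← taylorAlgHom_apply, map_mul, map_prod]
    simp [taylor_X, taylor_C, sub_eq_add_neg, add_assoc]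
  rw [← taylor_coeff, htaylor, coeff_C_mul, prod_X_add_C_coeff _ _ (by simpa using hk),
    card_univ]

end Polynomial

theorem PadicInt.norm_aeval_eq_norm_eval_map {p : ℕ} [Fact p.Prime] {L : Type*} [NormedField L]
    [Algebra ℚ_[p] L] (hL : ∀ y : ℚ_[p], ‖algebraMap ℚ_[p] L y‖ = ‖y‖) (x : ℤ_[p]) (P : ℤ[X]) :
    ‖aeval x P‖ = ‖(P.map (algebraMap ℤ L)).eval (algebraMap ℚ_[p] L x)‖ := by
  let g : ℤ_[p] →+* L := (algebraMap ℚ_[p] L).comp PadicInt.Coe.ringHom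
  rw [eval_map, ← aeval_def]
  change _ = ‖aeval (g.toIntAlgHom x) P‖
  rw [aeval_algHom_apply]
  exact (hL _).symm

namespace IsUltrametricDist

theorem of_norm_algebraMap (K : Type*) {L : Type*} [NormedField K] [IsUltrametricDist K]
    [NormedField L] [Algebra K L] (h : ∀ y : K, ‖algebraMap K L y‖ = ‖y‖) :
    IsUltrametricDist L :=
  isUltrametricDist_of_forall_norm_natCast_le_one fun m => by
    simpa only [← map_natCast (algebraMap K L), h] using norm_natCast_le_one K m

theorem norm_sum_eq_of_forall_lt {M ι : Type*} [SeminormedAddCommGroup M] [IsUltrametricDist M]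
    {s : Finset ι} {f : ι → M} {i : ι} (hi : i ∈ s)
    (h : ∀ j ∈ s, j ≠ i → ‖f j‖ < ‖f i‖) : ‖∑ j ∈ s, f j‖ = ‖f i‖ := by
  classical
  rw [← add_sum_erase s f hi]
  rcases (s.erase i).eq_empty_or_nonempty with he | hne
  · simp [he]
  obtain ⟨j, hj, hle⟩ := exists_norm_finsetSum_le_of_nonempty hne f
  have hlt : ‖∑ j ∈ s.erase i, f j‖ < ‖f i‖ :=
    hle.trans_lt (h j (mem_of_mem_erase hj) (ne_of_mem_erase hj))
  rw [norm_add_eq_max_of_norm_ne_norm hlt.ne', max_eq_left hlt.le]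

end IsUltrametricDist

namespace Finset

variable {ι : Type*} {w : ι → ℝ} {s : Finset ι} {b : ℝ}

theorem prod_le_pow_card_of_nonneg (hw : ∀ i ∈ s, 0 ≤ w i) (h : ∀ i ∈ s, w i ≤ b) :
    ∏ i ∈ s, w i ≤ b ^ #s :=
  (prod_le_prod hw h).trans_eq (prod_const b)

theorem pow_card_le_prod_of_nonneg (hb : 0 ≤ b) (h : ∀ i ∈ s, b ≤ w i) :
    b ^ #s ≤ ∏ i ∈ s, w i :=
  (prod_const b).symm.trans_le (prod_le_prod (fun _ _ => hb) h)

theorem prod_lt_pow_card_of_nonneg (hw : ∀ i ∈ s, 0 ≤ w i) (hb : 0 < b)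
    (h : ∀ i ∈ s, w i < b) (hs : s.Nonempty) : ∏ i ∈ s, w i < b ^ #s := by
  by_cases hzero : ∃ i ∈ s, w i = 0
  · rw [prod_eq_zero_iff.2 hzero]
    positivity
  push Not at hzero
  rw [← prod_const b]
  exact prod_lt_prod_of_nonempty (fun i hi => (hw i hi).lt_of_ne' (hzero i hi)) h hs

variable [DecidableEq ι] {A t : Finset ι}

theorem prod_le_prod_of_card_eq (hw : ∀ i, 0 ≤ w i) (hb : 0 ≤ b)
    (hA : ∀ i ∈ A, b ≤ w i) (hAc : ∀ i ∉ A, w i ≤ b) (hcard : #t = #A) :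
    ∏ i ∈ t, w i ≤ ∏ i ∈ A, w i := by
  rw [← prod_inter_mul_prod_sdiff t A, ← prod_inter_mul_prod_sdiff A t, inter_comm A t]
  refine mul_le_mul_of_nonneg_left ?_ (prod_nonneg fun i _ => hw i)
  calc ∏ i ∈ t \ A, w i ≤ b ^ #(t \ A) :=
        prod_le_pow_card_of_nonneg (fun i _ => hw i) fun i hi => hAc i (mem_sdiff.1 hi).2
    _ = b ^ #(A \ t) := by rw [card_sdiff_comm hcard]
    _ ≤ ∏ i ∈ A \ t, w i := pow_card_le_prod_of_nonneg hb fun i hi => hA i (mem_sdiff.1 hi).1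

theorem prod_lt_prod_of_card_eq (hw : ∀ i, 0 ≤ w i) (hb : 0 < b)
    (hA : ∀ i ∈ A, b ≤ w i) (hAc : ∀ i ∉ A, w i < b) (hcard : #t = #A) (hne : t ≠ A) :
    ∏ i ∈ t, w i < ∏ i ∈ A, w i := by
  rw [← prod_inter_mul_prod_sdiff t A, ← prod_inter_mul_prod_sdiff A t, inter_comm A t]
  refine mul_lt_mul_of_pos_left ?_ (prod_pos fun i hi => hb.trans_le (hA i (mem_inter.1 hi).2))
  have hdiff : (t \ A).Nonempty :=
    sdiff_nonempty.2 fun hsub => hne (eq_of_subset_of_card_le hsub hcard.ge)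
  calc ∏ i ∈ t \ A, w i < b ^ #(t \ A) :=
        prod_lt_pow_card_of_nonneg (fun i _ => hw i) hb
          (fun i hi => hAc i (mem_sdiff.1 hi).2) hdiff
    _ = b ^ #(A \ t) := by rw [card_sdiff_comm hcard]
    _ ≤ ∏ i ∈ A \ t, w i := pow_card_le_prod_of_nonneg hb.le fun i hi => hA i (mem_sdiff.1 hi).1

end Finset

section ElementarySymmetric

variable {K : Type*} [NormedField K] [IsUltrametricDist K]

theorem norm_sum_powersetCard_prod_le {ι : Type*} [Fintype ι] [DecidableEq ι] {β : ι → K}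
    {A : Finset ι} {b : ℝ} (hb : 0 ≤ b) (hA : ∀ i ∈ A, b ≤ ‖β i‖)
    (hAc : ∀ i ∉ A, ‖β i‖ ≤ b) :
    ‖∑ t ∈ powersetCard #A univ, ∏ i ∈ t, β i‖ ≤ ∏ i ∈ A, ‖β i‖ := by
  refine IsUltrametricDist.norm_sum_le_of_forall_le_of_nonneg
    (prod_nonneg fun i _ => norm_nonneg _) fun t ht => ?_
  rw [norm_prod]
  exact prod_le_prod_of_card_eq (fun i => norm_nonneg _) hb hA hAc (mem_powersetCard.1 ht).2

theorem norm_sum_powersetCard_prod_eq {ι : Type*} [Fintype ι] [DecidableEq ι] {β : ι → K}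
    {A : Finset ι} {b : ℝ} (hb : 0 < b) (hA : ∀ i ∈ A, b ≤ ‖β i‖)
    (hAc : ∀ i ∉ A, ‖β i‖ < b) :
    ‖∑ t ∈ powersetCard #A univ, ∏ i ∈ t, β i‖ = ∏ i ∈ A, ‖β i‖ := by
  rw [IsUltrametricDist.norm_sum_eq_of_forall_lt (mem_powersetCard.2 ⟨subset_univ A, rfl⟩),
    norm_prod]
  intro t ht hne
  rw [norm_prod, norm_prod]
  exact prod_lt_prod_of_card_eq (fun i => norm_nonneg _) hb hA hAc (mem_powersetCard.1 ht).2 hne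

/-- The witness `a` is the number of `i` with `‖β i‖ < ‖β j‖`. -/
theorem exists_pow_mul_norm_sum_powersetCard_prod_le {n : ℕ} {β : Fin n → K}
    (hβ : Monotone fun i => ‖β i‖) (j : Fin n) :
    ∃ a ≤ (j : ℕ), ‖β j‖ ^ (j + 1 - a) *
      ‖∑ t ∈ powersetCard (n - (j + 1)) univ, ∏ i ∈ t, β i‖ ≤
        ‖∑ t ∈ powersetCard (n - a) univ, ∏ i ∈ t, β i‖ := by
  obtain hb0 | hb := (norm_nonneg (β j)).eq_or_lt
  · exact ⟨j, le_rfl, by simp [← hb0]⟩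
  set b := ‖β j‖
  set top := Ioi j
  set far := univ.filter fun i => b ≤ ‖β i‖
  have htop : #top = n - (j + 1) := by simp [top]; omega
  have htop_far : top ⊆ far := fun i hi => by simpa [far] using hβ (mem_Ioi.1 hi).le
  have hj_far : j ∈ far \ top := by simp [far, top, b]
  have hsdiff_pos : 0 < #far - #top := card_sdiff_of_subset htop_far ▸ card_pos.2 ⟨j, hj_far⟩
  have hfar_le : #far ≤ n := (card_le_univ far).trans_eq (Fintype.card_fin n)
  have hgap : #(far \ top) = j + 1 - (n - #far) := by
    rw [card_sdiff_of_subset htop_far]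
    omega
  refine ⟨n - #far, by omega, ?_⟩
  have hsplit : ∏ i ∈ far, ‖β i‖ = b ^ (j + 1 - (n - #far)) * ∏ i ∈ top, ‖β i‖ := by
    rw [← prod_sdiff htop_far, ← hgap, ← prod_const b]
    congr 1
    refine prod_congr rfl fun i hi => ?_
    obtain ⟨hi_far, hi_top⟩ := mem_sdiff.1 hi
    exact le_antisymm (hβ (not_lt.1 (mem_Ioi.not.1 hi_top))) (by simpa [far] using hi_far)
  calc b ^ (j + 1 - (n - #far)) * ‖∑ t ∈ powersetCard (n - (j + 1)) univ, ∏ i ∈ t, β i‖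
      ≤ b ^ (j + 1 - (n - #far)) * ∏ i ∈ top, ‖β i‖ := by
        rw [← htop]
        gcongr
        exact norm_sum_powersetCard_prod_le hb.le (fun i hi => hβ (mem_Ioi.1 hi).le)
          fun i hi => hβ (not_lt.1 (mem_Ioi.not.1 hi))
    _ = ‖∑ t ∈ powersetCard (n - (n - #far)) univ, ∏ i ∈ t, β i‖ := by
        rw [← hsplit, Nat.sub_sub_self hfar_le,
          norm_sum_powersetCard_prod_eq hb (by simp [far]) (by simp [far])]

end ElementarySymmetric

theorem natCast_sub_mul_le_sub_of_antitoneOn {θ d : ℕ → ℝ} {n a j : ℕ}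
    (hd : ∀ k, 1 ≤ k → k ≤ n → d k = θ (k - 1) - θ k) (hanti : AntitoneOn d (Set.Icc 1 n))
    (haj : a ≤ j) (hjn : j ≤ n) : ((j - a : ℕ) : ℝ) * d j ≤ θ a - θ j := by
  have hstep : ∀ k ∈ Ico a j, d j ≤ θ k - θ (k + 1) := by
    intro k hk
    rw [mem_Ico] at hk
    have hdk : d (k + 1) = θ k - θ (k + 1) := by simpa using hd (k + 1) (by omega) (by omega)
    exact hdk ▸ hanti ⟨by omega, by omega⟩ ⟨by omega, hjn⟩ (by omega)
  have htel : ∑ k ∈ Ico a j, (θ k - θ (k + 1)) = θ a - θ j := by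
    simpa [neg_add_eq_sub] using sum_Ico_sub (fun k => -θ k) haj
  simpa [htel, Nat.card_Ico] using card_nsmul_le_sum (Ico a j) _ _ hstep

theorem le_inv_mul_rpow_neg_of_pow_mul_le {b δ Q e s t : ℝ} {m : ℕ} (hm : m ≠ 0)
    (hQ : 1 ≤ Q) (hδ0 : 0 < δ) (hδ1 : δ ≤ 1) (h : b ^ m * (δ * Q ^ (-t)) ≤ Q ^ (-s))
    (hst : m * e ≤ s - t) : b ≤ δ⁻¹ * Q ^ (-e) := by
  have hQ0 : 0 < Q := zero_lt_one.trans_le hQ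
  refine le_of_pow_le_pow_left₀ hm (by positivity) ?_
  calc b ^ m ≤ Q ^ (-s) / (δ * Q ^ (-t)) := (le_div_iff₀ (by positivity)).2 h
    _ = δ⁻¹ * Q ^ (t - s) := by
        rw [Real.rpow_sub hQ0, Real.rpow_neg hQ0.le, Real.rpow_neg hQ0.le]
        field_simp
    _ ≤ δ⁻¹ * (Q ^ (-e)) ^ m := by
        rw [← Real.rpow_mul_natCast hQ0.le]
        gcongr
        linarith
    _ ≤ δ⁻¹ ^ m * (Q ^ (-e)) ^ m := by
        gcongr
        exact le_self_pow₀ (one_le_inv₀ hδ0 |>.2 hδ1) hm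
    _ = (δ⁻¹ * Q ^ (-e)) ^ m := (mul_pow _ _ _).symm

/-- Let `p` be a prime, `x ∈ ℤ_p`, `Q > 1` and `0 < δ₀ ≤ 1`. Let
`P ∈ ℤ[X]` of degree `n ≥ 2` with `H(P) ≤ Q` satisfy
`δ₀ Q^{−θ_i} ≤ |(1/i!) P⁽ⁱ⁾(x)|_p ≤ Q^{−θ_i}` for all `0 ≤ i ≤ n`. Let `α₁, …, α_n` be the
roots of `P` (with multiplicity) in the algebraic closure of `ℚ_p`, ordered so that
`|x − α₁|_p ≤ ⋯ ≤ |x − α_n|_p`, and set `d_j := θ_{j−1} − θ_j`. If `d₁ ≥ ⋯ ≥ d_n ≥ 0`,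
then `|x − α_j|_p ≤ δ₀⁻¹ Q^{−d_j}` for all `1 ≤ j ≤ n`.

The algebraic closure of `ℚ_p` together with its (unique) extension of the `p`-adic absolute
value is modelled by an algebraically closed normed field `L`, algebraic over `ℚ_p`, whose
norm restricts to the `p`-adic norm on `ℚ_p`. -/
theorem stmt14 (p : ℕ) [Fact p.Prime]
    (L : Type*) [NormedField L] [Algebra ℚ_[p] L]
    (hL : ∀ y : ℚ_[p], ‖algebraMap ℚ_[p] L y‖ = ‖y‖)
    (x : ℤ_[p]) (Q δ₀ : ℝ) (hQ : 1 < Q) (hδ₀0 : 0 < δ₀) (hδ₀1 : δ₀ ≤ 1)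
    (n : ℕ) (hn : 2 ≤ n) (P : Polynomial ℤ)
    (θ : ℕ → ℝ)
    (hbounds : ∀ i ≤ n,
      δ₀ * Q ^ (-(θ i)) ≤ ‖Polynomial.aeval x (Polynomial.hasseDeriv i P)‖ ∧
      ‖Polynomial.aeval x (Polynomial.hasseDeriv i P)‖ ≤ Q ^ (-(θ i)))
    (α : Fin n → L)
    (hfact : P.map (algebraMap ℤ L) =
      Polynomial.C (algebraMap ℤ L P.leadingCoeff) *
        ∏ i : Fin n, (Polynomial.X - Polynomial.C (α i)))
    (hord : ∀ i j : Fin n, i ≤ j →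
      ‖algebraMap ℚ_[p] L (x : ℚ_[p]) - α i‖ ≤ ‖algebraMap ℚ_[p] L (x : ℚ_[p]) - α j‖)
    (d : ℕ → ℝ) (hd : ∀ j, 1 ≤ j → j ≤ n → d j = θ (j - 1) - θ j)
    (hdmono : ∀ j, 1 ≤ j → j < n → d (j + 1) ≤ d j) :
    ∀ j : ℕ, 1 ≤ j → ∀ hj : j ≤ n,
      ‖algebraMap ℚ_[p] L (x : ℚ_[p]) - α ⟨j - 1, by omega⟩‖ ≤ δ₀⁻¹ * Q ^ (-(d j)) := by
  intro j hj1 hjn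
  have : IsUltrametricDist L := .of_norm_algebraMap ℚ_[p] hL
  set y := algebraMap ℚ_[p] L x
  have hvalue (k : ℕ) (hk : k ≤ n) : ‖aeval x (hasseDeriv k P)‖ =
      ‖(P.leadingCoeff : L)‖ * ‖∑ t ∈ powersetCard (n - k) univ, ∏ i ∈ t, (y - α i)‖ := by
    rw [PadicInt.norm_aeval_eq_norm_eval_map hL, ← hasseDeriv_map, hfact,
      eval_hasseDeriv_C_mul_prod_X_sub_C _ _ _ (by simpa), Fintype.card_fin, norm_mul]
    rfl
  obtain ⟨a, ha, hgap⟩ := exists_pow_mul_norm_sum_powersetCard_prod_le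
    (β := fun i => y - α i) hord ⟨j - 1, by omega⟩
  simp only [Nat.sub_add_cancel hj1] at ha hgap
  have key : ‖y - α ⟨j - 1, by omega⟩‖ ^ (j - a) * (δ₀ * Q ^ (-θ j)) ≤ Q ^ (-θ a) :=
    calc _ ≤ ‖y - α ⟨j - 1, by omega⟩‖ ^ (j - a) * ‖aeval x (hasseDeriv j P)‖ := by
          gcongr
          exact (hbounds j hjn).1
      _ ≤ ‖aeval x (hasseDeriv a P)‖ := by
          rw [hvalue j hjn, hvalue a (by omega), mul_left_comm]
          gcongr
      _ ≤ Q ^ (-θ a) := (hbounds a (by omega)).2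
  have hanti : AntitoneOn d (Set.Icc 1 n) :=
    antitoneOn_of_succ_le Set.ordConnected_Icc fun k _ hk hk' => by
      simpa using hdmono k hk.1 (by simpa using hk'.2)
  exact le_inv_mul_rpow_neg_of_pow_mul_le (by omega) hQ.le hδ₀0 hδ₀1 key
    (natCast_sub_mul_le_sub_of_antitoneOn hd hanti (by omega) hjn)
end

section
/- Let p be a prime, n ≥ 1, x ∈ ℤ_p, and b₀, …, b_n ∈ ℤ_{≥0} with b₀ + b₁ + ⋯ + b_n = t(n+1) for some t ∈ ℕ. Set ξ_i = p^{−b_i} and Q = p^t. Then there exists a nonzero polynomial P ∈ ℤ[X] of degree at most n with H(P) ≤ Q satisfying |(1/i!) P^{(i)}(x)|_p ≤ ξ_i for all 0 ≤ i ≤ n. -/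
open Polynomial

/-- Let `p` be a prime, `n ≥ 1`, `x ∈ ℤ_p`, and `b₀, …, b_n ∈ ℤ_{≥0}` with
`b₀ + ⋯ + b_n = t(n+1)` for some `t ∈ ℕ`. Set `ξ_i = p^{-b_i}` and `Q = p^t`. Then there is a
nonzero `P ∈ ℤ[X]` of degree at most `n` with `H(P) ≤ Q` satisfying
`|(1/i!) P⁽ⁱ⁾(x)|_p ≤ ξ_i` for all `0 ≤ i ≤ n`. -/
theorem stmt16 (p : ℕ) [Fact p.Prime] (n : ℕ) (hn : 1 ≤ n) (x : ℤ_[p])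
    (b : ℕ → ℕ) (t : ℕ)
    (hb : ∑ i ∈ Finset.range (n + 1), b i = t * (n + 1)) :
    ∃ P : Polynomial ℤ, P ≠ 0 ∧ P.natDegree ≤ n ∧ polyHeight P ≤ p ^ t ∧
      ∀ i ≤ n, ‖Polynomial.aeval x (Polynomial.hasseDeriv i P)‖ ≤ (p : ℝ) ^ (-(b i : ℤ)) := by
  have hp : 1 < p := (Fact.out : p.Prime).one_lt
  -- build a polynomial from a coefficient tuple
  set poly : (Fin (n + 1) → Fin (p ^ t + 1)) → Polynomial ℤ :=
    fun c => ∑ i ∈ Finset.range (n + 1),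
      Polynomial.monomial i ((c ⟨i % (n+1), Nat.mod_lt _ (Nat.succ_pos n)⟩ : ℕ) : ℤ) with hpoly
  set f : (Fin (n + 1) → Fin (p ^ t + 1)) → ((i : Fin (n + 1)) → ZMod (p ^ b i)) :=
    fun c i => PadicInt.toZModPow (b i)
      (Polynomial.aeval x (Polynomial.hasseDeriv i (poly c))) with hf
  -- pigeonhole
  have hcard : Fintype.card ((i : Fin (n + 1)) → ZMod (p ^ b i)) <
      Fintype.card (Fin (n + 1) → Fin (p ^ t + 1)) := by
    rw [Fintype.card_pi, Fintype.card_fun]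
    simp only [ZMod.card, Fintype.card_fin]
    rw [Finset.prod_pow_eq_pow_sum]
    have : ∑ i : Fin (n+1), b i = t * (n + 1) := by
      rw [← hb, Finset.sum_range fun i => b i]
    rw [this, pow_mul]
    exact Nat.pow_lt_pow_left (Nat.lt_succ_self _) (Nat.succ_ne_zero n)
  obtain ⟨c₁, c₂, hne, heq⟩ := Fintype.exists_ne_map_eq_of_card_lt f hcard
  refine ⟨poly c₁ - poly c₂, ?_, ?_, ?_, ?_⟩
  -- coefficient formula
  · -- nonzero
    obtain ⟨j, hj⟩ := Function.ne_iff.mp hne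
    intro h0
    apply hj
    have := congrArg (fun P => Polynomial.coeff P (j : ℕ)) h0
    simp only [Polynomial.coeff_sub, Polynomial.coeff_zero, sub_eq_zero, hpoly,
      Polynomial.finset_sum_coeff, Polynomial.coeff_monomial] at this
    rw [Finset.sum_ite_eq', Finset.sum_ite_eq', if_pos (Finset.mem_range.mpr j.2),
      if_pos (Finset.mem_range.mpr j.2)] at this
    have hmod : (j : ℕ) % (n + 1) = (j : ℕ) := Nat.mod_eq_of_lt j.2
    have : (c₁ ⟨(j : ℕ) % (n+1), Nat.mod_lt _ (Nat.succ_pos n)⟩ : ℕ)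
        = (c₂ ⟨(j : ℕ) % (n+1), Nat.mod_lt _ (Nat.succ_pos n)⟩ : ℕ) := by exact_mod_cast this
    ext
    simpa [hmod] using this
  · -- degree
    apply le_trans (Polynomial.natDegree_sub_le _ _)
    simp only [max_le_iff]
    constructor <;>
    · apply Polynomial.natDegree_sum_le_of_forall_le
      intro i hi
      exact le_trans (Polynomial.natDegree_monomial_le _) (Nat.lt_succ_iff.mp (Finset.mem_range.mp hi))
  · -- height
    apply Finset.sup_le
    intro i _
    have hco : ∀ c : Fin (n + 1) → Fin (p ^ t + 1), ∀ k : ℕ,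
        0 ≤ (poly c).coeff k ∧ (poly c).coeff k ≤ (p ^ t : ℤ) := by
      intro c k
      simp only [hpoly, Polynomial.finset_sum_coeff, Polynomial.coeff_monomial,
        Finset.sum_ite_eq']
      split
      · constructor
        · positivity
        · exact_mod_cast Nat.lt_succ_iff.mp (Fin.is_lt _)
      · simp [pow_nonneg]
    obtain ⟨h1, h1'⟩ := hco c₁ i
    obtain ⟨h2, h2'⟩ := hco c₂ i
    rw [Polynomial.coeff_sub]
    have hpt : (0:ℤ) ≤ (p:ℤ)^t := by positivity
    have : ((p:ℤ)^t).natAbs = p ^ t := by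
      simp [Int.natAbs_pow]
    omega
  · -- norms
    intro i hi
    rw [PadicInt.norm_le_pow_iff_mem_span_pow]
    rw [← PadicInt.ker_toZModPow, RingHom.mem_ker]
    have := congrFun heq ⟨i, Nat.lt_succ_of_le hi⟩
    simp only [hf] at this
    rw [map_sub, map_sub, map_sub]
    simpa [sub_eq_zero] using this
end
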